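/- Assume b > 0 and that there exists N* > 0 with N*·I(N*) = 1 such that N < 1/I(N) for all N ∈ [0, N*) and 1/I(N) < N for all N > N*. Then for any firing rate sequence {N_{k,∞}}: if N_{0,∞} ≥ N* the sequence is monotone decreasing and converges to N*, and if N_{0,∞} ≤ N* the sequence is monotone increasing and converges to N*. -/

import Mathlib

open MeasureTheory Real Filter

/-- The function `I(N)` from the NNLIF model. -/
noncomputable def Ifun (b V_R V_F N : ℝ) : ℝ :=
  ∫ v in Set.Iic V_F,
    Real.exp (-(v - b * N) ^ 2 / 2) * ∫ w in (max v V_R)..V_F, Real.exp ((w - b * N) ^ 2 / 2)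

open Set Topology

/-!
By Fubini and the substitution `v = w - u`, `I(N) = ∫_{V_R}^{V_F} K(w - bN) dw` with
`K s = halfGaussMGF s = ∫_0^∞ exp (s u - u² / 2) du`, which is positive and increasing. So for
`b ≥ 0` the map `Φ N = 1 / I(N)` is continuous and nondecreasing, with fixed point `N*`.
Monotonicity of `Φ` keeps the iterates on the side of `N*` where they start, the crossing condition
moves them towards `N*`, and the limit of this bounded monotone sequence is a fixed point of `Φ` on
that side, i.e. `N*`.
-/

lemma integrable_exp_neg_sq_div_two : Integrable fun u : ℝ => exp (-u ^ 2 / 2) := by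
  convert integrable_exp_neg_mul_sq (by norm_num : (0 : ℝ) < 1 / 2) using 2 with u
  ring_nf

lemma integrable_exp_mul_sub_sq_div_two (s : ℝ) :
    Integrable fun u : ℝ => exp (s * u - u ^ 2 / 2) := by
  refine ((integrable_exp_neg_sq_div_two.comp_sub_right s).const_mul (exp (s ^ 2 / 2))).congr
    (ae_of_all _ fun u => ?_)
  simp only [← exp_add]
  ring_nf

lemma setIntegral_Iio_eq_setIntegral_Ioi_sub {E : Type*} [NormedAddCommGroup E] [NormedSpace ℝ E]
    (f : ℝ → E) (w : ℝ) :
    ∫ v in Iio w, f v = ∫ u in Ioi 0, f (w - u) := by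
  rw [← integral_indicator measurableSet_Iio, ← integral_indicator measurableSet_Ioi,
    ← integral_sub_left_eq_self _ volume w]
  congr 1 with u
  simp [indicator_apply]

theorem setIntegral_Iic_mul_intervalIntegral_max {g h : ℝ → ℝ} {a b : ℝ} (hab : a ≤ b)
    (hg : Integrable g) (hh : IntegrableOn h (Ioc a b)) :
    ∫ v in Iic b, g v * ∫ w in (max v a)..b, h w = ∫ w in a..b, h w * ∫ v in Iio w, g v := by
  set F : ℝ × ℝ → ℝ := {p | p.1 < p.2}.indicator fun p => g p.1 * (Ioc a b).indicator h p.2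
  have hF : Integrable F (volume.prod volume) :=
    (hg.mul_prod ((integrable_indicator_iff measurableSet_Ioc).2 hh)).indicator
      (measurableSet_lt measurable_fst measurable_snd)
  have hleft : ∀ v,
      ∫ w, F (v, w) = (Iic b).indicator (fun v => g v * ∫ w in (max v a)..b, h w) v := by
    intro v
    have : (fun w => F (v, w)) = (Ioi v).indicator fun w => g v * (Ioc a b).indicator h w := by
      ext w; simp [F, indicator_apply]
    rw [this, integral_indicator measurableSet_Ioi, integral_const_mul,
      setIntegral_indicator measurableSet_Ioc, inter_comm, Ioc_inter_Ioi, max_comm a v]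
    rcases le_or_gt v b with hv | hv
    · rw [indicator_of_mem (mem_Iic.2 hv), intervalIntegral.integral_of_le (max_le hv hab)]
    · rw [indicator_of_notMem (notMem_Iic.2 hv),
        Ioc_eq_empty (not_lt.2 (le_max_of_le_left hv.le)), setIntegral_empty, mul_zero]
  have hright : ∀ w,
      ∫ v, F (v, w) = (Ioc a b).indicator (fun w => h w * ∫ v in Iio w, g v) w := by
    intro w
    have : (fun v => F (v, w)) = fun v => (Iio w).indicator g v * (Ioc a b).indicator h w := by
      ext v; by_cases hv : v < w <;> simp [F, indicator_apply, hv]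
    rw [this, integral_mul_const, integral_indicator measurableSet_Iio]
    by_cases hw : w ∈ Ioc a b <;> simp [hw, mul_comm]
  calc ∫ v in Iic b, g v * ∫ w in (max v a)..b, h w
      = ∫ v, ∫ w, F (v, w) := by simp_rw [hleft, integral_indicator measurableSet_Iic]
    _ = ∫ w, ∫ v, F (v, w) := integral_integral_swap hF
    _ = ∫ w in a..b, h w * ∫ v in Iio w, g v := by
        simp_rw [hright, integral_indicator measurableSet_Ioc, intervalIntegral.integral_of_le hab]

/-- Equal to `exp (s ^ 2 / 2) * ∫ u in Iic s, exp (-u ^ 2 / 2)`, the Mills ratio at `-s`. -/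
noncomputable def halfGaussMGF (s : ℝ) : ℝ := ∫ u in Ioi 0, exp (s * u - u ^ 2 / 2)

lemma halfGaussMGF_pos (s : ℝ) : 0 < halfGaussMGF s :=
  haveI : NeZero (volume.restrict (Ioi (0 : ℝ))) := ⟨by simp⟩
  integral_exp_pos (integrable_exp_mul_sub_sq_div_two s).integrableOn

lemma monotone_halfGaussMGF : Monotone halfGaussMGF := fun s t hst =>
  setIntegral_mono_on (integrable_exp_mul_sub_sq_div_two s).integrableOn
    (integrable_exp_mul_sub_sq_div_two t).integrableOn measurableSet_Ioi fun u hu =>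
      exp_le_exp.2 (by nlinarith [mem_Ioi.1 hu])

theorem Ifun_eq_intervalIntegral_halfGaussMGF (b N : ℝ) {V_R V_F : ℝ} (hV : V_R ≤ V_F) :
    Ifun b V_R V_F N = ∫ w in V_R..V_F, halfGaussMGF (w - b * N) := by
  rw [Ifun, setIntegral_Iic_mul_intervalIntegral_max hV
    (integrable_exp_neg_sq_div_two.comp_sub_right (b * N)) _]
  · congr 1 with w
    rw [setIntegral_Iio_eq_setIntegral_Ioi_sub, halfGaussMGF, ← integral_const_mul]
    congr 1 with u
    rw [← exp_add]
    ring_nf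
  · exact (continuous_exp.comp (by fun_prop)).integrableOn_Ioc

lemma monotone_halfGaussMGF_comp_sub_const (c : ℝ) : Monotone fun w => halfGaussMGF (w - c) :=
  monotone_halfGaussMGF.comp fun _ _ h => sub_le_sub_right h c

lemma Ifun_pos (b N : ℝ) {V_R V_F : ℝ} (hV : V_R < V_F) : 0 < Ifun b V_R V_F N := by
  rw [Ifun_eq_intervalIntegral_halfGaussMGF b N hV.le]
  exact intervalIntegral.intervalIntegral_pos_of_pos
    (monotone_halfGaussMGF_comp_sub_const _).intervalIntegrable
    (fun w => halfGaussMGF_pos _) hV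

lemma antitone_Ifun {b V_R V_F : ℝ} (hb : 0 ≤ b) (hV : V_R ≤ V_F) : Antitone (Ifun b V_R V_F) := by
  intro N₁ N₂ hN
  rw [Ifun_eq_intervalIntegral_halfGaussMGF b N₁ hV, Ifun_eq_intervalIntegral_halfGaussMGF b N₂ hV]
  exact intervalIntegral.integral_mono_on hV
    (monotone_halfGaussMGF_comp_sub_const _).intervalIntegrable
    (monotone_halfGaussMGF_comp_sub_const _).intervalIntegrable
    fun w _ => monotone_halfGaussMGF (sub_le_sub_left (mul_le_mul_of_nonneg_left hN hb) w)

lemma continuous_Ifun (b : ℝ) {V_R V_F : ℝ} (hV : V_R ≤ V_F) : Continuous (Ifun b V_R V_F) := by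
  have hint : ∀ x y, IntervalIntegrable halfGaussMGF volume x y := fun _ _ =>
    monotone_halfGaussMGF.intervalIntegrable
  have hprim := intervalIntegral.continuous_primitive hint 0
  have heq : Ifun b V_R V_F = fun N => (∫ s in (0 : ℝ)..V_F - b * N, halfGaussMGF s) -
      ∫ s in (0 : ℝ)..V_R - b * N, halfGaussMGF s := by
    ext N
    rw [Ifun_eq_intervalIntegral_halfGaussMGF b N hV, intervalIntegral.integral_comp_sub_right,
      intervalIntegral.integral_interval_sub_left (hint _ _) (hint _ _)]
  rw [heq]
  exact (hprim.comp (by fun_prop)).sub (hprim.comp (by fun_prop))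

section Iteration

variable {α : Type*} [ConditionallyCompleteLinearOrder α] [TopologicalSpace α] [OrderTopology α]
  {f : α → α} {a : α}

theorem Monotone.antitone_iterate_tendsto_of_map_lt (hf : Monotone f) (hcont : Continuous f)
    (hfa : Function.IsFixedPt f a) (hlt : ∀ x, a < x → f x < x) {x : α} (hx : a ≤ x) :
    Antitone (fun n => f^[n] x) ∧ Tendsto (fun n => f^[n] x) atTop (𝓝 a) := by
  have hanti : Antitone (fun n => f^[n] x) := by
    refine hf.antitone_iterate_of_map_le ?_
    rcases hx.eq_or_lt with rfl | hx
    · exact hfa.le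
    · exact (hlt x hx).le
  have hge : ∀ n, a ≤ f^[n] x := fun n =>
    (Function.IsFixedPt.iterate hfa n).symm.le.trans (hf.iterate n hx)
  have htend := tendsto_atTop_ciInf hanti ⟨a, forall_mem_range.2 hge⟩
  have hfix : f (⨅ n, f^[n] x) = ⨅ n, f^[n] x :=
    isFixedPt_of_tendsto_iterate htend hcont.continuousAt
  have hlim : ⨅ n, f^[n] x = a := by
    refine ((le_ciInf hge).eq_or_lt).elim (fun h => h.symm) fun h => ?_
    exact absurd hfix (hlt _ h).ne
  exact ⟨hanti, hlim ▸ htend⟩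

theorem Monotone.monotone_iterate_tendsto_of_lt_map (hf : Monotone f) (hcont : Continuous f)
    (hfa : Function.IsFixedPt f a) (hlt : ∀ x, x < a → x < f x) {x : α} (hx : x ≤ a) :
    Monotone (fun n => f^[n] x) ∧ Tendsto (fun n => f^[n] x) atTop (𝓝 a) :=
  Monotone.antitone_iterate_tendsto_of_map_lt (α := αᵒᵈ) hf.dual hcont hfa hlt hx

end Iteration

theorem firingRateSeq_crossing_case_general (b V_R V_F : ℝ) (hV : V_R < V_F) (hb : 0 < b)
    (Nstar : ℝ)
    (hfix : Nstar * Ifun b V_R V_F Nstar = 1)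
    (hbelow : ∀ N : ℝ, 0 ≤ N → N < Nstar → N < 1 / Ifun b V_R V_F N)
    (habove : ∀ N : ℝ, Nstar < N → 1 / Ifun b V_R V_F N < N)
    (Nseq : ℕ → ℝ)
    (hrec : ∀ k : ℕ, Nseq (k + 1) = 1 / Ifun b V_R V_F (Nseq k)) :
    (Nstar ≤ Nseq 0 →
      Antitone Nseq ∧ Tendsto Nseq atTop (nhds Nstar)) ∧
    (Nseq 0 ≤ Nstar →
      Monotone Nseq ∧ Tendsto Nseq atTop (nhds Nstar)) := by
  have hIpos : ∀ N, 0 < Ifun b V_R V_F N := fun N => Ifun_pos b N hV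
  set Φ : ℝ → ℝ := fun N => 1 / Ifun b V_R V_F N
  have hmono : Monotone Φ := fun _ N₂ hN =>
    one_div_le_one_div_of_le (hIpos N₂) (antitone_Ifun hb.le hV.le hN)
  have hcont : Continuous Φ :=
    continuous_const.div (continuous_Ifun b hV.le) fun N => (hIpos N).ne'
  have hfixΦ : Function.IsFixedPt Φ Nstar := (eq_one_div_of_mul_eq_one_left hfix).symm
  have hbelowΦ : ∀ N, N < Nstar → N < Φ N := fun N hN =>
    (lt_or_ge N 0).elim (fun hneg => hneg.trans (one_div_pos.2 (hIpos N))) (hbelow N · hN)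
  have hiter : Nseq = fun n => Φ^[n] (Nseq 0) := by
    funext n
    induction n with
    | zero => rfl
    | succ n ih => rw [hrec, ih, Function.iterate_succ_apply']
  rw [hiter]
  exact ⟨hmono.antitone_iterate_tendsto_of_map_lt hcont hfixΦ habove,
    hmono.monotone_iterate_tendsto_of_lt_map hcont hfixΦ hbelowΦ⟩

/-- Case 1(a) of Theorem 2.3: `b > 0`, one equilibrium `N*` at which `1/I` crosses the
diagonal.  Firing rate sequences starting above `N*` decrease to `N*`, and those starting
below `N*` increase to `N*`. -/
theorem firingRateSeq_crossing_case (b V_R V_F : ℝ) (hV : V_R < V_F) (hb : 0 < b)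
    (Nstar : ℝ) (hNstar : 0 < Nstar)
    (hfix : Nstar * Ifun b V_R V_F Nstar = 1)
    (hbelow : ∀ N : ℝ, 0 ≤ N → N < Nstar → N < 1 / Ifun b V_R V_F N)
    (habove : ∀ N : ℝ, Nstar < N → 1 / Ifun b V_R V_F N < N)
    (Nseq : ℕ → ℝ) (h0 : 0 ≤ Nseq 0)
    (hrec : ∀ k : ℕ, Nseq (k + 1) = 1 / Ifun b V_R V_F (Nseq k)) :
    (Nstar ≤ Nseq 0 →
      Antitone Nseq ∧ Tendsto Nseq atTop (nhds Nstar)) ∧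
    (Nseq 0 ≤ Nstar →
      Monotone Nseq ∧ Tendsto Nseq atTop (nhds Nstar)) :=
  firingRateSeq_crossing_case_general b V_R V_F hV hb Nstar hfix hbelow habove Nseq hrec
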